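/- For every even nonnegative integer ℓ, ∫_{−1}^{1} P_ℓ(y)/√(1−y²) dy = π·(ℓ!)² / (2^{2ℓ} · ((ℓ/2)!)⁴). -/

import Mathlib

/-!
Substituting `y = cos θ` turns the integral into `∫₀^π P_ℓ(cos θ) dθ`. Expanding `(y² - 1)^ℓ`
binomially and differentiating termwise writes `P_{2m}` as an alternating combination of even
powers of `y`, whose integrals are the Wallis integrals `π C(2j, j) / 4^j`. The resulting
alternating sum of factorial quotients equals `C(2m, m)²`, which is proved with a
Wilf–Zeilberger pair.
-/

open Real

/-- Legendre polynomial of degree `l`, via Rodrigues' formula. -/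
noncomputable def legendreP (l : ℕ) (y : ℝ) : ℝ :=
  (1 / (2 ^ l * (Nat.factorial l : ℝ))) *
    iteratedDeriv l (fun t : ℝ => (t ^ 2 - 1) ^ l) y

open Finset Polynomial
open scoped Nat

theorem integral_div_sqrt_one_sub_sq (f : ℝ → ℝ) :
    ∫ y in (-1 : ℝ)..1, f y / √(1 - y ^ 2) = ∫ θ in 0..π, f (cos θ) := by
  rw [intervalIntegral.integral_of_le (by norm_num), intervalIntegral.integral_of_le pi_pos.le,
    ← MeasureTheory.integral_Icc_eq_integral_Ioc, MeasureTheory.integral_Ioc_eq_integral_Ioo,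
    ← bijOn_cos.image_eq,
    MeasureTheory.integral_image_eq_integral_abs_deriv_smul measurableSet_Icc
      (fun θ _ => (hasDerivAt_cos θ).hasDerivWithinAt) injOn_cos,
    MeasureTheory.integral_Icc_eq_integral_Ioo]
  refine MeasureTheory.setIntegral_congr_fun measurableSet_Ioo fun θ hθ => ?_
  have hsin : 0 < sin θ := sin_pos_of_pos_of_lt_pi hθ.1 hθ.2
  rw [← sin_sq, sqrt_sq hsin.le, smul_eq_mul, abs_neg, abs_of_pos hsin]
  field_simp

theorem iteratedDeriv_polynomial_eval {𝕜 : Type*} [NontriviallyNormedField 𝕜] (p : 𝕜[X])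
    (n : ℕ) : iteratedDeriv n (fun x => p.eval x) = fun x => (derivative^[n] p).eval x := by
  induction n with
  | zero => simp
  | succ n ih =>
    rw [iteratedDeriv_succ, ih, Function.iterate_succ_apply']
    exact funext fun x => Polynomial.deriv _

theorem legendreP_eq_sum (l : ℕ) (y : ℝ) :
    legendreP l y = 1 / (2 ^ l * l !) * ∑ k ∈ range (l + 1),
      (-1 : ℝ) ^ (l - k) * l.choose k * (2 * k).descFactorial l * y ^ (2 * k - l) := by
  have hexpand : (X ^ 2 - 1 : ℝ[X]) ^ l =
      ∑ k ∈ range (l + 1), C ((-1 : ℝ) ^ (l - k) * l.choose k) * X ^ (2 * k) := by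
    rw [sub_eq_add_neg, add_pow]
    refine sum_congr rfl fun k _ => ?_
    simp only [← pow_mul, map_mul, map_pow, map_neg, map_one, map_natCast]
    ring
  have hfun : (fun t : ℝ => (t ^ 2 - 1) ^ l) = fun t => ((X ^ 2 - 1 : ℝ[X]) ^ l).eval t := by
    simp
  rw [legendreP, hfun, iteratedDeriv_polynomial_eval, hexpand, iterate_derivative_sum]
  simp only [eval_finsetSum, iterate_derivative_C_mul, iterate_derivative_X_pow_eq_natCast_mul]
  simp [mul_assoc]

theorem centralBinom_mul_factorial_mul_factorial (n : ℕ) :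
    n.centralBinom * n ! * n ! = (2 * n)! := by
  have h := Nat.choose_mul_factorial_mul_factorial (show n ≤ 2 * n by omega)
  rwa [show 2 * n - n = n by omega, ← Nat.centralBinom_eq_two_mul_choose] at h

theorem integral_cos_pow_two_mul (n : ℕ) :
    ∫ θ in 0..π, cos θ ^ (2 * n) = π * n.centralBinom / 4 ^ n := by
  induction n with
  | zero => simp
  | succ n ih =>
    have hrec : ((n : ℝ) + 1) * (n + 1).centralBinom = 2 * (2 * n + 1) * n.centralBinom := by
      exact_mod_cast Nat.succ_mul_centralBinom_succ n
    rw [Nat.mul_succ, integral_cos_pow, ih]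
    simp only [sin_zero, sin_pi, mul_zero, sub_zero, zero_div, zero_add]
    field_simp
    push_cast
    linear_combination (-2 * (4 : ℝ) ^ n) * hrec

-- A Wilf–Zeilberger pair: summing `wz_recurrence` over `j` shows that `∑ j, wzSummand m j`
-- satisfies the recurrence of `m.centralBinom ^ 2`.
noncomputable def wzSummand (m j : ℕ) : ℝ :=
  (-1) ^ (m + j) * 4 ^ m / 4 ^ j * (2 * m + 2 * j)! / ((j ! : ℝ) ^ 2 * (m - j)! * (m + j)!)

noncomputable def wzCertificate (m j : ℕ) : ℝ :=
  8 * (4 * m + 3) * (-1) ^ (m + j) * 4 ^ m / 4 ^ j * j ^ 2 * (2 * m + 2 * j)! /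
    ((j ! : ℝ) ^ 2 * (m + 1 - j)! * (m + j)!)

theorem wzCertificate_zero_right (m : ℕ) : wzCertificate m 0 = 0 := by
  simp [wzCertificate]

-- Stated with `m = j + a` so that the truncated subtractions `m - j` reduce to `a`.
theorem wz_recurrence (j a : ℕ) :
    ((j + a : ℕ) + 1 : ℝ) ^ 2 * wzSummand (j + a + 1) j
        - 4 * (2 * (j + a : ℕ) + 1 : ℝ) ^ 2 * wzSummand (j + a) j
      = wzCertificate (j + a) (j + 1) - wzCertificate (j + a) j := by
  simp only [wzSummand, wzCertificate]
  rw [show j + a + 1 - j = a + 1 by omega, show j + a - j = a by omega,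
    show j + a + 1 - (j + 1) = a by omega,
    show 2 * (j + a + 1) + 2 * j = 2 * (j + a) + 2 * j + 1 + 1 by omega,
    show 2 * (j + a) + 2 * (j + 1) = 2 * (j + a) + 2 * j + 1 + 1 by omega,
    show j + a + (j + 1) = j + a + j + 1 by omega, show j + a + 1 + j = j + a + j + 1 by omega]
  simp only [Nat.factorial_succ, pow_succ]
  push_cast
  field_simp
  ring

theorem wz_boundary (m : ℕ) :
    ((m : ℝ) + 1) ^ 2 * wzSummand (m + 1) (m + 1) + wzCertificate m (m + 1) = 0 := by
  simp only [wzSummand, wzCertificate]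
  rw [show 2 * (m + 1) + 2 * (m + 1) = 2 * m + 2 * m + 1 + 1 + 1 + 1 by omega,
    show 2 * m + 2 * (m + 1) = 2 * m + 2 * m + 1 + 1 by omega,
    show m + 1 + (m + 1) = m + m + 1 + 1 by omega, show m + (m + 1) = m + m + 1 by omega]
  simp only [Nat.factorial_succ, pow_succ, Nat.sub_self, Nat.factorial_zero]
  push_cast
  field_simp
  ring

theorem sum_wzSummand_recurrence (m : ℕ) :
    ((m : ℝ) + 1) ^ 2 * ∑ j ∈ range (m + 1 + 1), wzSummand (m + 1) j
      = 4 * (2 * m + 1) ^ 2 * ∑ j ∈ range (m + 1), wzSummand m j := by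
  have htelescope : ∑ j ∈ range (m + 1),
      (((m : ℝ) + 1) ^ 2 * wzSummand (m + 1) j - 4 * (2 * m + 1) ^ 2 * wzSummand m j)
        = wzCertificate m (m + 1) - wzCertificate m 0 := by
    rw [← sum_range_sub]
    refine sum_congr rfl fun j hj => ?_
    obtain ⟨a, rfl⟩ := Nat.exists_eq_add_of_le (Nat.lt_succ_iff.mp (mem_range.mp hj))
    exact wz_recurrence j a
  rw [sum_sub_distrib, ← mul_sum, ← mul_sum, wzCertificate_zero_right] at htelescope
  rw [sum_range_succ, mul_add]
  linarith [wz_boundary m]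

theorem sum_wzSummand (m : ℕ) :
    ∑ j ∈ range (m + 1), wzSummand m j = (m.centralBinom : ℝ) ^ 2 := by
  induction m with
  | zero => simp [wzSummand]
  | succ m ih =>
    have hrec : ((m : ℝ) + 1) * (m + 1).centralBinom = 2 * (2 * m + 1) * m.centralBinom := by
      exact_mod_cast Nat.succ_mul_centralBinom_succ m
    refine mul_left_cancel₀ (pow_ne_zero 2 (Nat.cast_add_one_ne_zero m)) ?_
    rw [sum_wzSummand_recurrence, ih]
    linear_combination
      (-((m : ℝ) + 1) * (m + 1).centralBinom - 2 * (2 * m + 1) * m.centralBinom) * hrec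

theorem coeff_mul_integral_cos_pow_eq_wzSummand (m j : ℕ) (hj : j ≤ m) :
    (-1 : ℝ) ^ (2 * m - (m + j)) * (2 * m).choose (m + j) * (2 * (m + j)).descFactorial (2 * m)
        * ∫ θ in 0..π, cos θ ^ (2 * (m + j) - 2 * m)
      = π * (2 * m)! / 4 ^ m * wzSummand m j := by
  have hchoose : ((2 * m).choose (m + j) : ℝ) = (2 * m)! / ((m + j)! * (m - j)!) := by
    rw [Nat.cast_choose ℝ (by omega : m + j ≤ 2 * m), show 2 * m - (m + j) = m - j by omega]
  have hdesc : ((2 * (m + j)).descFactorial (2 * m) : ℝ) = (2 * m + 2 * j)! / (2 * j)! := by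
    have h := Nat.factorial_mul_descFactorial (show 2 * m ≤ 2 * m + 2 * j by omega)
    rw [Nat.add_sub_cancel_left] at h
    rw [eq_div_iff (by positivity), mul_comm, mul_add]
    exact_mod_cast h
  have hcentral : (j.centralBinom : ℝ) = (2 * j)! / (j ! * j !) := by
    rw [eq_div_iff (by positivity), ← mul_assoc]
    exact_mod_cast centralBinom_mul_factorial_mul_factorial j
  have hsign : (-1 : ℝ) ^ (2 * m - (m + j)) = (-1) ^ (m + j) := by
    rw [show 2 * m - (m + j) = m - j by omega, show m + j = m - j + 2 * j by omega, pow_add,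
      pow_mul]
    norm_num
  rw [show 2 * (m + j) - 2 * m = 2 * j by omega, integral_cos_pow_two_mul, hchoose, hdesc,
    hcentral, hsign, wzSummand]
  field_simp

theorem integral_legendreP_cos (m : ℕ) :
    ∫ θ in 0..π, legendreP (2 * m) (cos θ) = π * m.centralBinom ^ 2 / 16 ^ m := by
  simp_rw [legendreP_eq_sum, intervalIntegral.integral_const_mul]
  rw [intervalIntegral.integral_finsetSum fun k _ => by
    apply Continuous.intervalIntegrable; fun_prop]
  simp_rw [intervalIntegral.integral_const_mul]
  rw [show 2 * m + 1 = m + (m + 1) by omega, sum_range_add]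
  have hlow : ∀ k ∈ range m, (-1 : ℝ) ^ (2 * m - k) * (2 * m).choose k
      * (2 * k).descFactorial (2 * m) * ∫ θ in 0..π, cos θ ^ (2 * k - 2 * m) = 0 := fun k hk => by
    rw [Nat.descFactorial_eq_zero_iff_lt.2 (by simp at hk; omega)]
    simp
  rw [sum_eq_zero hlow, zero_add,
    sum_congr rfl fun j hj => coeff_mul_integral_cos_pow_eq_wzSummand m j
      (Nat.lt_succ_iff.mp (mem_range.mp hj)),
    ← mul_sum, sum_wzSummand, pow_mul, show (16 : ℝ) = 4 * 4 by norm_num, mul_pow]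
  field_simp
  norm_num

/-- For `ℓ` even, `∫_{-1}^1 P_ℓ(y)/√(1-y²) dy = π (ℓ!)² / (2^{2ℓ} ((ℓ/2)!)⁴)`. -/
theorem legendre_weighted_integral (l : ℕ) (hl : Even l) :
    (∫ y in (-1 : ℝ)..1, legendreP l y / Real.sqrt (1 - y ^ 2)) =
      π * (Nat.factorial l : ℝ) ^ 2 /
        (2 ^ (2 * l) * (Nat.factorial (l / 2) : ℝ) ^ 4) := by
  obtain ⟨m, rfl⟩ := hl
  have hcentral : (m.centralBinom : ℝ) * m ! * m ! = (2 * m)! := by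
    exact_mod_cast centralBinom_mul_factorial_mul_factorial m
  rw [← two_mul, Nat.mul_div_cancel_left m two_pos, integral_div_sqrt_one_sub_sq,
    integral_legendreP_cos, ← hcentral, pow_mul, pow_mul]
  field_simp
  norm_num
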